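/- arXiv:1406.3503 — 4 statements merged into one kernel-verified Lean document; each statement's English description precedes it below -/
import Mathlib

section
/- Every subgroup of PGL_4(k) (k algebraically closed of characteristic zero) isomorphic to (Z/3Z)³ is conjugate to the group G_27 generated by the classes of diag[ω,1,1,1], diag[1,ω,1,1] and diag[1,1,ω,1], where ω is a primitive third root of unity. -/
/-!
Every element of `G ≅ (ℤ/3)³` has order dividing `3`, and `G` is abelian. An element `x` of
`PGL_4(k)` with `x³ = 1` lifts to a matrix `A` with `A³ = 1` (divide any lift by a cube root of
the scalar it cubes to). Lifts `A, B` of commuting elements commute: their commutator is a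
scalar `c`, with `c³ = 1` because `A B A⁻¹ = c B` and `B³ = 1`, and with `c⁴ = 1` by taking
determinants. The lifts thus form a commuting family of semisimple matrices, which is
simultaneously diagonalizable; the diagonal entries are cube roots of unity, and modulo scalars
such a diagonal matrix is a product of powers of `d1, d2, d3`. So a conjugate of `G` lies in
`G₂₇`, which has at most `27` elements, and comparing orders gives equality.
-/

open Matrix Polynomial
open scoped commutatorElement

namespace Matrix.GeneralLinearGroup

variable {n k : Type*} [Fintype n] [DecidableEq n] [Field k]

theorem scalar_mem_center (u : kˣ) : scalar n u ∈ Subgroup.center (GL n k) :=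
  Subgroup.mem_center_iff.mpr fun g ↦ (scalar_commute u g).symm

theorem commute_of_commute_mk {m : ℕ} (hnm : (Fintype.card n).Coprime m) {A B : GL n k}
    (hB : B ^ m = 1)
    (h : Commute (A : GL n k ⧸ Subgroup.center (GL n k))
      (B : GL n k ⧸ Subgroup.center (GL n k))) :
    Commute A B := by
  have hcen : ⁅A, B⁆ ∈ Subgroup.center (GL n k) := by
    rw [← QuotientGroup.eq_one_iff, ← QuotientGroup.mk'_apply, map_commutatorElement,
      commutatorElement_eq_one_iff_commute]
    exact h
  obtain ⟨c, hc⟩ := center_eq_range_scalar (n := n) (R := k) ▸ hcen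
  have hpow_m : ⁅A, B⁆ ^ m = 1 := by
    have hconj : A * B * A⁻¹ = ⁅A, B⁆ * B := by rw [commutatorElement_def]; group
    have := congrArg (· ^ m) hconj
    simp only [conj_pow, hB, mul_one, mul_inv_cancel] at this
    rwa [Commute.mul_pow ((Subgroup.mem_center_iff.mp hcen) B).symm, hB, mul_one,
      eq_comm] at this
  have hpow_card : ⁅A, B⁆ ^ Fintype.card n = 1 := by
    have hdet : det ⁅A, B⁆ = 1 := by
      rw [map_commutatorElement, commutatorElement_eq_one_iff_commute]
      exact Commute.all _ _
    rw [← hc, det_scalar] at hdet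
    rw [← hc, ← map_pow, hdet, map_one]
  rw [← commutatorElement_eq_one_iff_commute, ← pow_one ⁅A, B⁆, ← hnm.gcd_eq_one]
  exact pow_gcd_eq_one.mpr ⟨hpow_card, hpow_m⟩

theorem exists_mk_eq_of_pow_eq_one [IsAlgClosed k] {m : ℕ} (hm : m ≠ 0)
    (x : GL n k ⧸ Subgroup.center (GL n k)) (hx : x ^ m = 1) :
    ∃ A : GL n k, (A : GL n k ⧸ Subgroup.center (GL n k)) = x ∧ A ^ m = 1 := by
  obtain ⟨B, rfl⟩ := QuotientGroup.mk_surjective x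
  have hcen : B ^ m ∈ Subgroup.center (GL n k) := by
    rwa [← QuotientGroup.eq_one_iff, QuotientGroup.mk_pow]
  obtain ⟨c, hc⟩ := center_eq_range_scalar (n := n) (R := k) ▸ hcen
  obtain ⟨r, hr⟩ := IsAlgClosed.exists_pow_nat_eq (c : k) (Nat.pos_of_ne_zero hm)
  have hr0 : r ≠ 0 := by rintro rfl; exact c.ne_zero (by rw [← hr, zero_pow hm])
  set u := Units.mk0 r hr0
  have hu : u ^ m = c := Units.ext (by simpa [u] using hr)
  refine ⟨scalar n u⁻¹ * B, ?_, ?_⟩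
  · rw [QuotientGroup.mk_mul, (QuotientGroup.eq_one_iff _).mpr (scalar_mem_center _), one_mul]
  · rw [Commute.mul_pow (scalar_commute u⁻¹ B), ← map_pow, inv_pow, hu, map_inv, hc,
      inv_mul_cancel]

theorem commute_of_val_eq_diagonal {u w : GL n k} {a b : n → k}
    (hu : (u : Matrix n n k) = diagonal a) (hw : (w : Matrix n n k) = diagonal b) :
    Commute u w :=
  Units.ext (by simp [hu, hw, mul_comm])

theorem pow_eq_one_iff_of_val_eq_diagonal {u : GL n k} {a : n → k}
    (hu : (u : Matrix n n k) = diagonal a) {m : ℕ} : u ^ m = 1 ↔ ∀ j, a j ^ m = 1 := by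
  rw [← Units.val_inj, Units.val_pow_eq_pow_val, hu, diagonal_pow, Units.val_one,
    ← diagonal_one, diagonal_eq_diagonal_iff]
  rfl

end Matrix.GeneralLinearGroup

namespace Module.End

variable {K V ι : Type*} [Field K] [AddCommGroup V] [Module K V]

theorem isSemisimple_of_pow_eq_one {f : End K V} {m : ℕ} (hm : (m : K) ≠ 0) (hf : f ^ m = 1) :
    f.IsSemisimple :=
  isSemisimple_of_squarefree_aeval_eq_zero (separable_X_pow_sub_C 1 hm one_ne_zero).squarefree
    (by simp [hf])

theorem span_setOf_common_eigenvector_eq_top [IsAlgClosed K] [FiniteDimensional K V]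
    (f : ι → End K V) (hcomm : Pairwise fun i j ↦ Commute (f i) (f j))
    (hss : ∀ i, (f i).IsSemisimple) :
    Submodule.span K {v | ∀ i, ∃ μ : K, f i v = μ • v} = ⊤ := by
  have htop := iSup_iInf_maxGenEigenspace_eq_top_of_iSup_maxGenEigenspace_eq_top_of_commute f
    hcomm fun i ↦ iSup_maxGenEigenspace_eq_top (f i)
  have heig (i : ι) :=
    (isFinitelySemisimple_iff_isSemisimple.mpr (hss i)).maxGenEigenspace_eq_eigenspace
  simp only [heig] at htop
  refine eq_top_iff.mpr
    (htop ▸ iSup_le fun χ v hv ↦ Submodule.subset_span fun i ↦ ⟨χ i, ?_⟩)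
  exact mem_eigenspace_iff.mp ((Submodule.mem_iInf _).mp hv i)

end Module.End

namespace Matrix

variable {K n ι : Type*} [Field K] [Fintype n] [DecidableEq n]

theorem exists_conj_diagonal_of_eigenbasis (A : ι → Matrix n n K)
    (b : Module.Basis n K (n → K)) (hb : ∀ j i, ∃ μ : K, A i *ᵥ b j = μ • b j) :
    ∃ P : GL n K, ∀ i, ∃ d : n → K, (P⁻¹ : GL n K) * A i * P = diagonal d := by
  choose μ hμ using hb
  let _ := (Pi.basisFun K n).invertibleToMatrix b
  refine ⟨unitOfInvertible ((Pi.basisFun K n).toMatrix b), fun i ↦ ⟨fun j ↦ μ j i, ?_⟩⟩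
  rw [coe_units_inv, mul_assoc]
  refine (inv_mul_eq_iff_eq_mul_of_invertible ((Pi.basisFun K n).toMatrix b) _ _).mpr ?_
  ext x y
  have hxy := congrFun (hμ y i) x
  simp only [mulVec, dotProduct, Pi.smul_apply, smul_eq_mul] at hxy
  rw [mul_diagonal, mul_apply]
  simp only [val_unitOfInvertible, Module.Basis.toMatrix_apply, Pi.basisFun_repr, hxy, mul_comm]

theorem exists_conj_diagonal_of_commute [IsAlgClosed K] (A : ι → Matrix n n K)
    (hcomm : Pairwise fun i j ↦ Commute (A i) (A j))
    (hss : ∀ i, Module.End.IsSemisimple (toLin' (A i))) :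
    ∃ P : GL n K, ∀ i, ∃ d : n → K, (P⁻¹ : GL n K) * A i * P = diagonal d := by
  have hspan := Module.End.span_setOf_common_eigenvector_eq_top (fun i ↦ toLin' (A i))
    (fun i j hij ↦ (hcomm hij).map toLinAlgEquiv'.toRingHom) hss
  let b := Module.Basis.ofSpan hspan.ge
  have hb := Module.Basis.ofSpan_subset hspan.ge
  refine exists_conj_diagonal_of_eigenbasis A (b.reindex (b.indexEquiv (Pi.basisFun K n)))
    fun j i ↦ ?_
  rw [Module.Basis.reindex_apply]
  exact hb (Set.mem_range_self _) i

end Matrix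

namespace Subgroup

variable {H : Type*} [Group H] {a b c : H}

theorem closure_triple_subset_range_pow (hab : Commute a b) (hac : Commute a c)
    (hbc : Commute b c) {n : ℕ} [NeZero n] (ha : a ^ n = 1) (hb : b ^ n = 1) (hc : c ^ n = 1) :
    (closure {a, b, c} : Set H) ⊆ Set.range fun t : Fin n × Fin n × Fin n ↦
      a ^ (t.1 : ℕ) * b ^ (t.2.1 : ℕ) * c ^ (t.2.2 : ℕ) := by
  have hfin : ∀ x ∈ ({a, b, c} : Set H), IsOfFinOrder x := by
    rintro x (rfl | rfl | rfl) <;>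
      exact isOfFinOrder_iff_pow_eq_one.mpr ⟨n, NeZero.pos n, ‹_›⟩
  suffices ∀ x ∈ Submonoid.closure {a, b, c}, ∃ i j l : ℕ, a ^ i * b ^ j * c ^ l = x by
    intro x hx
    rw [SetLike.mem_coe, ← mem_toSubmonoid, closure_toSubmonoid_of_isOfFinOrder hfin] at hx
    obtain ⟨i, j, l, rfl⟩ := this x hx
    refine ⟨(⟨i % n, Nat.mod_lt _ (NeZero.pos n)⟩, ⟨j % n, Nat.mod_lt _ (NeZero.pos n)⟩,
      ⟨l % n, Nat.mod_lt _ (NeZero.pos n)⟩), ?_⟩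
    simp only [← pow_eq_pow_mod _ ha, ← pow_eq_pow_mod _ hb, ← pow_eq_pow_mod _ hc]
  intro x hx
  induction hx using Submonoid.closure_induction with
  | mem x hx =>
    rcases hx with rfl | rfl | rfl
    exacts [⟨1, 0, 0, by simp⟩, ⟨0, 1, 0, by simp⟩, ⟨0, 0, 1, by simp⟩]
  | one => exact ⟨0, 0, 0, by simp⟩
  | mul x y _ _ hx hy =>
    obtain ⟨i, j, l, rfl⟩ := hx
    obtain ⟨i', j', l', rfl⟩ := hy
    refine ⟨i + i', j + j', l + l', ?_⟩
    simp only [pow_add, mul_assoc, (hac.pow_pow i' l).symm.left_comm,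
      (hab.pow_pow i' j).symm.left_comm, (hbc.pow_pow j' l).symm.left_comm]

theorem finite_closure_triple (hab : Commute a b) (hac : Commute a c) (hbc : Commute b c)
    {n : ℕ} [NeZero n] (ha : a ^ n = 1) (hb : b ^ n = 1) (hc : c ^ n = 1) :
    Finite (closure {a, b, c}) :=
  ((Set.finite_range _).subset (closure_triple_subset_range_pow hab hac hbc ha hb hc)).to_subtype

theorem natCard_closure_triple_le (hab : Commute a b) (hac : Commute a c) (hbc : Commute b c)
    {n : ℕ} [NeZero n] (ha : a ^ n = 1) (hb : b ^ n = 1) (hc : c ^ n = 1) :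
    Nat.card (closure {a, b, c}) ≤ n ^ 3 := by
  calc Nat.card (closure {a, b, c})
      ≤ Nat.card (Set.range fun t : Fin n × Fin n × Fin n ↦
          a ^ (t.1 : ℕ) * b ^ (t.2.1 : ℕ) * c ^ (t.2.2 : ℕ)) :=
        Nat.card_mono (Set.finite_range _) (closure_triple_subset_range_pow hab hac hbc ha hb hc)
    _ ≤ Nat.card (Fin n × Fin n × Fin n) := Finite.card_range_le _
    _ = n ^ 3 := by
      simp only [Nat.card_eq_fintype_card, Fintype.card_prod, Fintype.card_fin]
      ring

end Subgroup

section DiagonalCubeRoots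

open Matrix.GeneralLinearGroup

variable {k : Type*} [Field k] {ω : k} {d1 d2 d3 : GL (Fin 4) k}

theorem mk_mem_closure_of_val_eq_diagonal (hω : IsPrimitiveRoot ω 3)
    (hd1 : (d1 : Matrix (Fin 4) (Fin 4) k) = diagonal ![ω, 1, 1, 1])
    (hd2 : (d2 : Matrix (Fin 4) (Fin 4) k) = diagonal ![1, ω, 1, 1])
    (hd3 : (d3 : Matrix (Fin 4) (Fin 4) k) = diagonal ![1, 1, ω, 1])
    {u : GL (Fin 4) k} {v : Fin 4 → k} (hu : (u : Matrix (Fin 4) (Fin 4) k) = diagonal v)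
    (hu3 : u ^ 3 = 1) :
    (QuotientGroup.mk u : GL (Fin 4) k ⧸ Subgroup.center (GL (Fin 4) k)) ∈
      Subgroup.closure {QuotientGroup.mk d1, QuotientGroup.mk d2, QuotientGroup.mk d3} := by
  have hv := (pow_eq_one_iff_of_val_eq_diagonal hu).mp hu3
  have hv3 : v 3 ≠ 0 := fun h ↦ by simpa [h] using hv 3
  have hratio (j : Fin 4) : ∃ e : ℕ, ω ^ e = v j / v 3 := by
    obtain ⟨e, -, he⟩ := hω.eq_pow_of_pow_eq_one (ξ := v j / v 3)
      (by rw [div_pow, hv, hv, div_one])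
    exact ⟨e, he⟩
  obtain ⟨e1, he1⟩ := hratio 0
  obtain ⟨e2, he2⟩ := hratio 1
  obtain ⟨e3, he3⟩ := hratio 2
  have hdecomp : u = scalar (Fin 4) (Units.mk0 (v 3) hv3) * (d1 ^ e1 * d2 ^ e2 * d3 ^ e3) := by
    ext : 1
    simp only [hu, hd1, hd2, hd3, Units.val_mul, Units.val_pow_eq_pow_val, coe_scalar,
      diagonal_pow, diagonal_mul_diagonal, Units.val_mk0, scalar_apply]
    congr 1
    ext j
    fin_cases j <;> simp [he1, he2, he3, mul_div_cancel₀ _ hv3]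
  rw [hdecomp, QuotientGroup.mk_mul, (QuotientGroup.eq_one_iff _).mpr (scalar_mem_center _),
    one_mul]
  simp only [QuotientGroup.mk_mul, QuotientGroup.mk_pow]
  refine mul_mem (mul_mem (pow_mem ?_ _) (pow_mem ?_ _)) (pow_mem ?_ _) <;>
    exact Subgroup.subset_closure (by simp)

theorem finite_closure_mk_and_natCard_le (hω3 : ω ^ 3 = 1)
    (hd1 : (d1 : Matrix (Fin 4) (Fin 4) k) = diagonal ![ω, 1, 1, 1])
    (hd2 : (d2 : Matrix (Fin 4) (Fin 4) k) = diagonal ![1, ω, 1, 1])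
    (hd3 : (d3 : Matrix (Fin 4) (Fin 4) k) = diagonal ![1, 1, ω, 1]) :
    Finite (Subgroup.closure {QuotientGroup.mk d1, QuotientGroup.mk d2, QuotientGroup.mk d3} :
        Subgroup (GL (Fin 4) k ⧸ Subgroup.center (GL (Fin 4) k))) ∧
      Nat.card (Subgroup.closure {QuotientGroup.mk d1, QuotientGroup.mk d2, QuotientGroup.mk d3} :
        Subgroup (GL (Fin 4) k ⧸ Subgroup.center (GL (Fin 4) k))) ≤ 27 := by
  let π := QuotientGroup.mk' (Subgroup.center (GL (Fin 4) k))
  have hcube (d : GL (Fin 4) k) (v : Fin 4 → k)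
      (hd : (d : Matrix (Fin 4) (Fin 4) k) = diagonal v) (hv : ∀ j, v j ^ 3 = 1) :
      π d ^ 3 = 1 := by
    rw [← map_pow, (pow_eq_one_iff_of_val_eq_diagonal hd).mpr hv, map_one]
  have h1 := hcube d1 _ hd1 (by simp [Fin.forall_fin_succ, hω3])
  have h2 := hcube d2 _ hd2 (by simp [Fin.forall_fin_succ, hω3])
  have h3 := hcube d3 _ hd3 (by simp [Fin.forall_fin_succ, hω3])
  have h12 := (commute_of_val_eq_diagonal hd1 hd2).map π
  have h13 := (commute_of_val_eq_diagonal hd1 hd3).map π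
  have h23 := (commute_of_val_eq_diagonal hd2 hd3).map π
  exact ⟨Subgroup.finite_closure_triple h12 h13 h23 h1 h2 h3,
    Subgroup.natCard_closure_triple_le h12 h13 h23 h1 h2 h3⟩

theorem exists_map_conj_le_closure_mk [IsAlgClosed k] (hω : IsPrimitiveRoot ω 3)
    (hd1 : (d1 : Matrix (Fin 4) (Fin 4) k) = diagonal ![ω, 1, 1, 1])
    (hd2 : (d2 : Matrix (Fin 4) (Fin 4) k) = diagonal ![1, ω, 1, 1])
    (hd3 : (d3 : Matrix (Fin 4) (Fin 4) k) = diagonal ![1, 1, ω, 1])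
    (G : Subgroup (GL (Fin 4) k ⧸ Subgroup.center (GL (Fin 4) k)))
    (hcomm : ∀ x y : G, Commute x y) (hcube : ∀ x : G, x ^ 3 = 1) :
    ∃ g : GL (Fin 4) k ⧸ Subgroup.center (GL (Fin 4) k),
      Subgroup.map (MulAut.conj g).toMonoidHom G ≤
        Subgroup.closure {QuotientGroup.mk d1, QuotientGroup.mk d2, QuotientGroup.mk d3} := by
  have hcube' (x : G) : (x : GL (Fin 4) k ⧸ Subgroup.center (GL (Fin 4) k)) ^ 3 = 1 := by
    rw [← Subgroup.coe_pow, hcube, Subgroup.coe_one]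
  choose A hA hA3 using fun x : G ↦ exists_mk_eq_of_pow_eq_one three_ne_zero _ (hcube' x)
  have hAcomm : Pairwise fun x y ↦ Commute (A x : Matrix (Fin 4) (Fin 4) k) (A y) := by
    refine fun x y _ ↦ (commute_of_commute_mk (by norm_num) (hA3 y) ?_).map (Units.coeHom _)
    rw [hA x, hA y]
    exact (hcomm x y).map G.subtype
  have hss (x : G) : Module.End.IsSemisimple (toLin' (A x : Matrix (Fin 4) (Fin 4) k)) :=
    Module.End.isSemisimple_of_pow_eq_one hω.neZero'.out (by
      rw [← toLin'_pow, ← Units.val_pow_eq_pow_val, hA3, Units.val_one, toLin'_one]; rfl)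
  obtain ⟨P, hP⟩ := exists_conj_diagonal_of_commute _ hAcomm hss
  refine ⟨(P : GL (Fin 4) k ⧸ Subgroup.center (GL (Fin 4) k))⁻¹, ?_⟩
  rintro _ ⟨x, hx, rfl⟩
  obtain ⟨v, hv⟩ := hP ⟨x, hx⟩
  have hconj : MulAut.conj (P : GL (Fin 4) k ⧸ Subgroup.center (GL (Fin 4) k))⁻¹ x =
      QuotientGroup.mk (MulAut.conj P⁻¹ (A ⟨x, hx⟩)) := by
    simp [hA]
  rw [MulEquiv.coe_toMonoidHom, hconj]
  refine mk_mem_closure_of_val_eq_diagonal hω hd1 hd2 hd3 (v := v) ?_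
    (by rw [← map_pow, hA3, map_one])
  simpa using hv

end DiagonalCubeRoots

theorem stmt2_general (k : Type*) [Field k] [IsAlgClosed k]
    (ω : k) (hω3 : ω ^ 3 = 1) (hω1 : ω ≠ 1)
    (d1 d2 d3 : GL (Fin 4) k)
    (hd1 : (d1 : Matrix (Fin 4) (Fin 4) k) = Matrix.diagonal ![ω, 1, 1, 1])
    (hd2 : (d2 : Matrix (Fin 4) (Fin 4) k) = Matrix.diagonal ![1, ω, 1, 1])
    (hd3 : (d3 : Matrix (Fin 4) (Fin 4) k) = Matrix.diagonal ![1, 1, ω, 1])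
    (G : Subgroup (GL (Fin 4) k ⧸ Subgroup.center (GL (Fin 4) k)))
    (hG : Nonempty (G ≃*
      (Multiplicative (ZMod 3) × Multiplicative (ZMod 3) × Multiplicative (ZMod 3)))) :
    ∃ g : GL (Fin 4) k ⧸ Subgroup.center (GL (Fin 4) k),
      Subgroup.map (MulAut.conj g).toMonoidHom G =
        Subgroup.closure
          {QuotientGroup.mk d1, QuotientGroup.mk d2, QuotientGroup.mk d3} := by
  obtain ⟨e⟩ := hG
  have hω : IsPrimitiveRoot ω 3 := IsPrimitiveRoot.iff_orderOf.mpr (orderOf_eq_prime hω3 hω1)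
  have hexp : ∀ z : Multiplicative (ZMod 3) × Multiplicative (ZMod 3) × Multiplicative (ZMod 3),
      z ^ 3 = 1 := by decide
  obtain ⟨g, hle⟩ := exists_map_conj_le_closure_mk hω hd1 hd2 hd3 G
    (fun x y ↦ e.injective (by simp [mul_comm])) (fun x ↦ e.injective (by simp [hexp]))
  obtain ⟨hfin, hcard⟩ := finite_closure_mk_and_natCard_le hω3 hd1 hd2 hd3
  refine ⟨g, Subgroup.eq_of_le_of_card_ge hle ?_⟩
  rw [Subgroup.card_map_of_injective (MulAut.conj g).injective, Nat.card_congr e.toEquiv]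
  simpa using hcard

theorem stmt2 (k : Type*) [Field k] [IsAlgClosed k] [CharZero k]
    (ω : k) (hω3 : ω ^ 3 = 1) (hω1 : ω ≠ 1)
    (d1 d2 d3 : GL (Fin 4) k)
    (hd1 : (d1 : Matrix (Fin 4) (Fin 4) k) = Matrix.diagonal ![ω, 1, 1, 1])
    (hd2 : (d2 : Matrix (Fin 4) (Fin 4) k) = Matrix.diagonal ![1, ω, 1, 1])
    (hd3 : (d3 : Matrix (Fin 4) (Fin 4) k) = Matrix.diagonal ![1, 1, ω, 1])
    (G : Subgroup (GL (Fin 4) k ⧸ Subgroup.center (GL (Fin 4) k)))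
    (hG : Nonempty (G ≃*
      (Multiplicative (ZMod 3) × Multiplicative (ZMod 3) × Multiplicative (ZMod 3)))) :
    ∃ g : GL (Fin 4) k ⧸ Subgroup.center (GL (Fin 4) k),
      Subgroup.map (MulAut.conj g).toMonoidHom G =
        Subgroup.closure
          {QuotientGroup.mk d1, QuotientGroup.mk d2, QuotientGroup.mk d3} :=
  stmt2_general k ω hω3 hω1 d1 d2 d3 hd1 hd2 hd3 G hG
end

section
/- Let f be a homogeneous cubic form in variables x,y,z,t over an algebraically closed field k of characteristic zero, and suppose that for each of A₁ = diag[ω,1,1,1], A₂ = diag[1,ω,1,1], A₃ = diag[1,1,ω,1] (ω a primitive cube root of unity) the form f(A_i·(x,y,z,t)) is a scalar multiple of f, and suppose the projective surface V(f) is nonsingular. Then f = a₁x³ + a₂y³ + a₃z³ + a₄t³ with a₁a₂a₃a₄ ≠ 0. -/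
/-!
Scaling the variable `x_i` by `ω` multiplies the coefficient of `x^m` by `ω ^ m_i`, so invariance
up to a scalar forces `m_i mod 3` to be constant on the support of `f` for `i = 0, 1, 2`.
Nonsingularity at the coordinate point `e_j` forces, for every `j`, a monomial with `m_j ≥ 2`.
For `i ≤ 2` that monomial has `m_i = 3`: with `m_i = 2` all monomials would have `m_i = 2`,
including one with `m_3 ≥ 2`, which is impossible in degree 3. Hence all exponents are
`0` or `3`, so `f` is diagonal, and each `x_j³` occurs with a nonzero coefficient.
-/

open MvPolynomial

/-- The polynomial `f(A·(x,y,z,t))`, i.e. the linear substitution of the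
variables of `f` given by the matrix `A`. -/
noncomputable def substM {k : Type*} [CommRing k] (A : Matrix (Fin 4) (Fin 4) k)
    (f : MvPolynomial (Fin 4) k) : MvPolynomial (Fin 4) k :=
  MvPolynomial.aeval (fun i => ∑ j : Fin 4, MvPolynomial.C (A i j) * MvPolynomial.X j) f

namespace MvPolynomial

variable {σ R : Type*}

lemma IsHomogeneous.sum_apply_eq [CommSemiring R] [Fintype σ] {f : MvPolynomial σ R} {n : ℕ}
    (hf : f.IsHomogeneous n) {m : σ →₀ ℕ} (hm : m ∈ f.support) : ∑ i, m i = n := by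
  rw [← Finsupp.degree_eq_sum, Finsupp.degree_eq_weight_one]
  exact hf (mem_support_iff.mp hm)

lemma IsHomogeneous.eval_piSingle_one [CommSemiring R] [Fintype σ] [DecidableEq σ]
    {g : MvPolynomial σ R} {d : ℕ} (hg : g.IsHomogeneous d) (j : σ) :
    eval (Pi.single j 1) g = coeff (Finsupp.single j d) g := by
  rw [eval_eq', Finset.sum_eq_single (Finsupp.single j d)]
  · rw [Finset.prod_eq_one, mul_one]
    intro i _
    by_cases hij : i = j <;> simp [hij]
  · intro m hm hne
    obtain ⟨i, hij, hi⟩ : ∃ i ≠ j, m i ≠ 0 := by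
      by_contra! h
      have hsum := hg.sum_apply_eq hm
      rw [Finset.sum_eq_single j (fun i _ hi => h i hi) (by simp)] at hsum
      exact hne (Finsupp.ext fun i => by
        by_cases hij : i = j <;> simp [hij, hsum, h])
    rw [Finset.prod_eq_zero (Finset.mem_univ i) (by simp [hij, hi]), mul_zero]
  · intro h
    rw [notMem_support_iff.mp h, zero_mul]

lemma exists_le_apply_of_isHomogeneous_of_not_singular [CommRing R] [Nontrivial R] [Fintype σ]
    [DecidableEq σ] {f : MvPolynomial σ R} {d : ℕ} (hf : f.IsHomogeneous (d + 1))
    (hns : ¬ ∃ a : σ → R, a ≠ 0 ∧ ∀ i, eval a (pderiv i f) = 0) (j : σ) :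
    ∃ m ∈ f.support, d ≤ m j := by
  by_contra! h
  -- `∂_l f (e_j)` is a multiple of the coefficient of `x_j^d x_l` in `f`.
  refine hns ⟨Pi.single j 1, by simp, fun l => ?_⟩
  rw [hf.pderiv.eval_piSingle_one j, Nat.add_sub_cancel, coeff_pderiv,
    notMem_support_iff.mp fun hm => (h _ hm).not_ge (by simp), zero_mul]

lemma eq_sum_monomial_single_of_support_subset [CommSemiring R] [Fintype σ] [DecidableEq σ]
    {f : MvPolynomial σ R} {n : ℕ} (hn : n ≠ 0)
    (hsupp : ∀ m ∈ f.support, ∃ j, m = Finsupp.single j n) :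
    f = ∑ j, monomial (Finsupp.single j n) (coeff (Finsupp.single j n) f) := by
  have hinj : Function.Injective fun j : σ => Finsupp.single j n :=
    Finsupp.single_left_injective hn
  conv_lhs => rw [f.as_sum]
  rw [← Finset.sum_image (s := Finset.univ) (f := fun m => monomial m (coeff m f)) hinj.injOn]
  refine Finset.sum_subset (fun m hm => ?_) (fun m _ hm => ?_)
  · obtain ⟨j, rfl⟩ := hsupp m hm
    exact Finset.mem_image_of_mem _ (Finset.mem_univ j)
  · rw [notMem_support_iff.mp hm, monomial_zero]

end MvPolynomial

namespace Finsupp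

variable {σ : Type*} [Fintype σ]

lemma add_le_sum_of_ne (m : σ →₀ ℕ) {i j : σ} (h : i ≠ j) : m i + m j ≤ ∑ s, m s := by
  classical
  rw [← Finset.sum_pair h]
  exact Finset.sum_le_sum_of_subset (Finset.subset_univ _)

lemma eq_single_of_apply_eq_sum {m : σ →₀ ℕ} {j : σ} (h : m j = ∑ s, m s) :
    m = single j (m j) := by
  classical
  ext i
  by_cases hij : i = j
  · simp [hij]
  · have := m.add_le_sum_of_ne hij
    simp only [single_apply, Ne.symm hij, if_false]
    omega

end Finsupp

lemma exists_eq_single_three {σ : Type*} [Fintype σ] {S : Finset (σ →₀ ℕ)} {t : σ}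
    (hdeg : ∀ m ∈ S, ∑ i, m i = 3) (hmod : ∀ i ≠ t, ∀ m ∈ S, ∀ m' ∈ S, m i % 3 = m' i % 3)
    (hbig : ∀ j, ∃ m ∈ S, 2 ≤ m j) {m : σ →₀ ℕ} (hm : m ∈ S) :
    ∃ j, m = Finsupp.single j 3 := by
  obtain ⟨w, hwS, hw⟩ := hbig t
  have hzero_or_three : ∀ i ≠ t, m i = 0 ∨ m i = 3 := by
    intro i hi
    obtain ⟨v, hvS, hv⟩ := hbig i
    have := w.add_le_sum_of_ne hi
    have := v.add_le_sum_of_ne hi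
    have := hmod i hi m hm v hvS
    have := hmod i hi w hwS v hvS
    have := hdeg v hvS
    have := hdeg w hwS
    have := hdeg m hm
    have := Finset.single_le_sum (fun s _ => Nat.zero_le (m s)) (Finset.mem_univ i)
    omega
  obtain ⟨j, hj⟩ : ∃ j, m j = 3 := by
    by_cases h : ∃ i ≠ t, m i = 3
    · obtain ⟨i, -, hi⟩ := h
      exact ⟨i, hi⟩
    · push Not at h
      refine ⟨t, ?_⟩
      rw [← hdeg m hm, Finset.sum_eq_single t
        (fun i _ hi => (hzero_or_three i hi).resolve_right (h i hi)) (by simp)]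
  exact ⟨j, by rw [Finsupp.eq_single_of_apply_eq_sum (hj.trans (hdeg m hm).symm), hj]⟩

section

variable {R : Type*}

lemma substM_diagonal [CommRing R] (d : Fin 4 → R) (f : MvPolynomial (Fin 4) R) :
    substM (Matrix.diagonal d) f = aeval (fun i => C (d i) * X i) f := by
  unfold substM
  congr
  funext i
  simp [Matrix.diagonal_apply, apply_ite C, ite_mul]

lemma coeff_substM_diagonal [CommRing R] (d : Fin 4 → R) (f : MvPolynomial (Fin 4) R)
    (m : Fin 4 →₀ ℕ) :
    coeff m (substM (Matrix.diagonal d) f) = (∏ i, d i ^ m i) * coeff m f := by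
  rw [substM_diagonal]
  induction f using MvPolynomial.induction_on' with
  | monomial s a =>
    have hscale : aeval (fun i => C (d i) * X i) (monomial s a)
        = monomial s ((∏ i, d i ^ s i) * a) := by
      simp [Finsupp.prod_fintype, mul_pow, Finset.prod_mul_distrib,
        monomial_eq, mul_comm, mul_left_comm]
    rw [hscale, coeff_monomial, coeff_monomial]
    split_ifs with h
    · rw [h]
    · rw [mul_zero]
  | add p q hp hq => rw [map_add, coeff_add, hp, hq, coeff_add, mul_add]

lemma prod_pow_eq_of_substM_diagonal_eq_smul [CommRing R] [IsDomain R] {d : Fin 4 → R}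
    {f : MvPolynomial (Fin 4) R} {c : R} (h : substM (Matrix.diagonal d) f = c • f)
    {m : Fin 4 →₀ ℕ} (hm : m ∈ f.support) : ∏ i, d i ^ m i = c :=
  mul_right_cancel₀ (mem_support_iff.mp hm) <| by
    rw [← coeff_substM_diagonal, h, coeff_smul, smul_eq_mul]

lemma pow_eq_of_substM_diagonal_mulSingle_eq_smul [CommRing R] [IsDomain R] {i : Fin 4}
    {a : R} {f : MvPolynomial (Fin 4) R} {c : R}
    (h : substM (Matrix.diagonal (Pi.mulSingle i a)) f = c • f)
    {m : Fin 4 →₀ ℕ} (hm : m ∈ f.support) : a ^ m i = c := by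
  rw [← prod_pow_eq_of_substM_diagonal_eq_smul h hm,
    Finset.prod_eq_single i (by simp_all) (by simp), Pi.mulSingle_eq_same]

end

theorem stmt3_general (k : Type*) [Field k]
    (ω : k) (hω3 : ω ^ 3 = 1) (hω1 : ω ≠ 1)
    (f : MvPolynomial (Fin 4) k) (hf : f.IsHomogeneous 3)
    (hinv : ∀ A ∈ ({Matrix.diagonal ![ω, 1, 1, 1], Matrix.diagonal ![1, ω, 1, 1],
        Matrix.diagonal ![1, 1, ω, 1]} : Set (Matrix (Fin 4) (Fin 4) k)),
      ∃ c : k, c ≠ 0 ∧ substM A f = c • f)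
    (hns : ¬ ∃ a : Fin 4 → k, a ≠ 0 ∧
      ∀ i : Fin 4, MvPolynomial.eval a (MvPolynomial.pderiv i f) = 0) :
    ∃ a₁ a₂ a₃ a₄ : k, a₁ * a₂ * a₃ * a₄ ≠ 0 ∧
      f = MvPolynomial.C a₁ * MvPolynomial.X 0 ^ 3 + MvPolynomial.C a₂ * MvPolynomial.X 1 ^ 3 +
          MvPolynomial.C a₃ * MvPolynomial.X 2 ^ 3 + MvPolynomial.C a₄ * MvPolynomial.X 3 ^ 3 := by
  have hω : IsOfFinOrder ω := isOfFinOrder_iff_pow_eq_one.mpr ⟨3, by norm_num, hω3⟩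
  have hmod : ∀ i ≠ (3 : Fin 4), ∀ m ∈ f.support, ∀ m' ∈ f.support, m i % 3 = m' i % 3 := by
    intro i hi m hm m' hm'
    obtain ⟨c, -, hc⟩ := hinv (Matrix.diagonal (Pi.mulSingle i ω)) <| by
      fin_cases i <;> simp at hi ⊢ <;> simp [Fin.forall_fin_succ]
    rw [← orderOf_eq_prime hω3 hω1, ← hω.pow_inj_mod,
      pow_eq_of_substM_diagonal_mulSingle_eq_smul hc hm,
      pow_eq_of_substM_diagonal_mulSingle_eq_smul hc hm']
  have hbig := exists_le_apply_of_isHomogeneous_of_not_singular (d := 2) hf hns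
  have hsupp : ∀ m ∈ f.support, ∃ j, m = Finsupp.single j 3 :=
    fun m hm => exists_eq_single_three (fun m hm => hf.sum_apply_eq hm) hmod hbig hm
  have hcoeff : ∀ j, coeff (Finsupp.single j 3) f ≠ 0 := by
    intro j
    obtain ⟨m, hm, hmj⟩ := hbig j
    obtain ⟨i, rfl⟩ := hsupp m hm
    obtain rfl : i = j := by
      by_contra h
      simp [h] at hmj
    exact mem_support_iff.mp hm
  refine ⟨coeff (Finsupp.single 0 3) f, coeff (Finsupp.single 1 3) f,
    coeff (Finsupp.single 2 3) f, coeff (Finsupp.single 3 3) f, by simp [hcoeff], ?_⟩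
  conv_lhs => rw [eq_sum_monomial_single_of_support_subset three_ne_zero hsupp]
  simp only [Fin.sum_univ_four, C_mul_X_pow_eq_monomial]

theorem stmt3 (k : Type*) [Field k] [IsAlgClosed k] [CharZero k]
    (ω : k) (hω3 : ω ^ 3 = 1) (hω1 : ω ≠ 1)
    (f : MvPolynomial (Fin 4) k) (hf : f.IsHomogeneous 3)
    (hinv : ∀ A ∈ ({Matrix.diagonal ![ω, 1, 1, 1], Matrix.diagonal ![1, ω, 1, 1],
        Matrix.diagonal ![1, 1, ω, 1]} : Set (Matrix (Fin 4) (Fin 4) k)),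
      ∃ c : k, c ≠ 0 ∧ substM A f = c • f)
    (hns : ¬ ∃ a : Fin 4 → k, a ≠ 0 ∧
      ∀ i : Fin 4, MvPolynomial.eval a (MvPolynomial.pderiv i f) = 0) :
    ∃ a₁ a₂ a₃ a₄ : k, a₁ * a₂ * a₃ * a₄ ≠ 0 ∧
      f = MvPolynomial.C a₁ * MvPolynomial.X 0 ^ 3 + MvPolynomial.C a₂ * MvPolynomial.X 1 ^ 3 +
          MvPolynomial.C a₃ * MvPolynomial.X 2 ^ 3 + MvPolynomial.C a₄ * MvPolynomial.X 3 ^ 3 :=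
  stmt3_general k ω hω3 hω1 f hf hinv hns
end

section
/- The surface V(x²y + y²z + z²t + t²x) in P³ over an algebraically closed field of characteristic zero is nonsingular. -/
/-!
Writing `(x, y, z, t)` for a common zero of the partial derivatives, the equations say
`x² = -2yz`, `y² = -2zt`, `z² = -2tx`, `t² = -2xy`. Multiplying them suitably gives
`15 (xyzt)² = 0`, so one coordinate vanishes; the equations are invariant under the cyclic shift
`(x, y, z, t) ↦ (y, z, t, x)`, and once one coordinate is zero the squares of the others vanish in
turn.
-/

open MvPolynomial

/-- The vanishing of the partials `f_y, f_z, f_t, f_x` of `x²y + y²z + z²t + t²x`. -/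
def IsCyclicCritical {R : Type*} [CommRing R] (x y z t : R) : Prop :=
  x ^ 2 + 2 * y * z = 0 ∧ y ^ 2 + 2 * z * t = 0 ∧ z ^ 2 + 2 * t * x = 0 ∧ t ^ 2 + 2 * x * y = 0

namespace IsCyclicCritical

variable {R : Type*} [CommRing R] {x y z t : R}

theorem rotate (h : IsCyclicCritical x y z t) : IsCyclicCritical y z t x :=
  ⟨h.2.1, h.2.2.1, h.2.2.2, h.1⟩

theorem fifteen_mul_sq_eq_zero (h : IsCyclicCritical x y z t) :
    15 * (x * y * z * t) ^ 2 = 0 := by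
  obtain ⟨hx, hy, hz, ht⟩ := h
  linear_combination (-(y ^ 2 * z ^ 2 * t ^ 2)) * hx + (2 * y * z * z ^ 2 * t ^ 2) * hy +
    (-(4 * y * z ^ 2 * t * t ^ 2)) * hz + (8 * x * y * z ^ 2 * t ^ 2) * ht

variable [NoZeroDivisors R]

theorem eq_zero_of_left_eq_zero (h : IsCyclicCritical x y z t) (hx : x = 0) :
    x = 0 ∧ y = 0 ∧ z = 0 ∧ t = 0 := by
  obtain ⟨-, hy, hz, ht⟩ := h
  have ht0 : t = 0 := pow_eq_zero_iff two_ne_zero |>.mp (by linear_combination ht - 2 * y * hx)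
  have hy0 : y = 0 := pow_eq_zero_iff two_ne_zero |>.mp (by linear_combination hy - 2 * z * ht0)
  have hz0 : z = 0 := pow_eq_zero_iff two_ne_zero |>.mp (by linear_combination hz - 2 * t * hx)
  exact ⟨hx, hy0, hz0, ht0⟩

theorem eq_zero (h : IsCyclicCritical x y z t) (h15 : (15 : R) ≠ 0) :
    x = 0 ∧ y = 0 ∧ z = 0 ∧ t = 0 := by
  have hprod : x * y * z * t = 0 :=
    pow_eq_zero_iff two_ne_zero |>.mp ((mul_eq_zero.mp h.fifteen_mul_sq_eq_zero).resolve_left h15)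
  simp only [mul_eq_zero, or_assoc] at hprod
  rcases hprod with hx | hy | hz | ht
  · exact h.eq_zero_of_left_eq_zero hx
  · obtain ⟨hy, hz, ht, hx⟩ := h.rotate.eq_zero_of_left_eq_zero hy
    exact ⟨hx, hy, hz, ht⟩
  · obtain ⟨hz, ht, hx, hy⟩ := h.rotate.rotate.eq_zero_of_left_eq_zero hz
    exact ⟨hx, hy, hz, ht⟩
  · obtain ⟨ht, hx, hy, hz⟩ := h.rotate.rotate.rotate.eq_zero_of_left_eq_zero ht
    exact ⟨hx, hy, hz, ht⟩

end IsCyclicCritical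

theorem isCyclicCritical_of_eval_pderiv_eq_zero {R : Type*} [CommRing R] (a : Fin 4 → R)
    (h : ∀ i, eval a (pderiv i
      (X 0 ^ 2 * X 1 + X 1 ^ 2 * X 2 + X 2 ^ 2 * X 3 + X 3 ^ 2 * X 0 : MvPolynomial (Fin 4) R)) = 0) :
    IsCyclicCritical (a 0) (a 1) (a 2) (a 3) := by
  have h0 := h 0
  have h1 := h 1
  have h2 := h 2
  have h3 := h 3
  simp only [Fin.isValue, map_add, Derivation.leibniz, pderiv_X, ne_eq, one_ne_zero,
    not_false_eq_true, Pi.single_eq_of_ne, smul_eq_mul, mul_zero, Derivation.leibniz_pow,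
    Nat.add_one_sub_one, pow_one, Pi.single_eq_same, mul_one, nsmul_eq_mul, Nat.cast_ofNat,
    zero_add, Fin.reduceEq, add_zero, map_mul, eval_X, eval_ofNat, map_pow,
    zero_ne_one] at h0 h1 h2 h3
  exact ⟨by linear_combination h1, by linear_combination h2, by linear_combination h3,
    by linear_combination h0⟩

theorem stmt7_general (k : Type*) [Field k] [CharZero k]
    (f : MvPolynomial (Fin 4) k)
    (hf : f = MvPolynomial.X 0 ^ 2 * MvPolynomial.X 1 +
        MvPolynomial.X 1 ^ 2 * MvPolynomial.X 2 +
        MvPolynomial.X 2 ^ 2 * MvPolynomial.X 3 +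
        MvPolynomial.X 3 ^ 2 * MvPolynomial.X 0) :
    ¬ ∃ a : Fin 4 → k, a ≠ 0 ∧
      ∀ i : Fin 4, MvPolynomial.eval a (MvPolynomial.pderiv i f) = 0 := by
  rintro ⟨a, ha, h⟩
  subst hf
  obtain ⟨h0, h1, h2, h3⟩ :=
    (isCyclicCritical_of_eval_pderiv_eq_zero a h).eq_zero (by norm_num)
  exact ha (funext fun i => by fin_cases i <;> assumption)

theorem stmt7 (k : Type*) [Field k] [IsAlgClosed k] [CharZero k]
    (f : MvPolynomial (Fin 4) k)
    (hf : f = MvPolynomial.X 0 ^ 2 * MvPolynomial.X 1 +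
        MvPolynomial.X 1 ^ 2 * MvPolynomial.X 2 +
        MvPolynomial.X 2 ^ 2 * MvPolynomial.X 3 +
        MvPolynomial.X 3 ^ 2 * MvPolynomial.X 0) :
    ¬ ∃ a : Fin 4 → k, a ≠ 0 ∧
      ∀ i : Fin 4, MvPolynomial.eval a (MvPolynomial.pderiv i f) = 0 :=
  stmt7_general k f hf
end

section
/- The cubic surface V(f) with f(x,y,z,t) = 3√15·x³ + 10(y³+z³+t³) - 3√15·x·y² - 6(√15·x + 5y)·z·t in P³(C) is nonsingular. -/
/-!
Write `s = √15` and `(x, y, z, t)` for a common zero of the partial derivatives. Since `s² = 15`,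
`5 f_x/(3s) - f_y/3` factors as `(s x + 5 y)(s x - 3 y)`. If `s x + 5 y = 0`, the mixed terms of
`f_z` and `f_t` vanish, forcing `z = t = 0`, and then `y = x = 0`. If `s x = 3 y`, the equations
`f_y = f_z = f_t = 0` become `2 y² = 5 z t`, `5 z² = 8 y t`, `5 t² = 8 y z`, whose only common
zero is the origin since `y⁴` lies in the ideal they generate.
-/

open MvPolynomial

theorem cubic_gradient_factor {R : Type*} [CommRing R] {s x y z t : R} (hs : s ^ 2 = 15)
    (hx : 3 * x ^ 2 - y ^ 2 - 2 * z * t = 0)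
    (hy : 5 * y ^ 2 - s * x * y - 5 * z * t = 0) :
    (s * x + 5 * y) * (s * x - 3 * y) = 0 := by
  linear_combination 5 * hx - 2 * hy + x ^ 2 * hs

section CubicGradient

variable {K : Type*} [Field K] [CharZero K] {s x y z t : K}

theorem eq_zero_of_quadric_system (hy : 2 * y ^ 2 - 5 * z * t = 0)
    (hz : 5 * z ^ 2 - 8 * y * t = 0) (ht : 5 * t ^ 2 - 8 * y * z = 0) :
    y = 0 ∧ z = 0 ∧ t = 0 := by
  have hy4 : y ^ 4 = 0 := by
    linear_combination (-25 / 108 * t ^ 2) * hz + (-40 / 108 * y * t) * ht +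
      (5 / 108 * (54 / 5 * y ^ 2 - 5 * z * t)) * hy
  have hy0 : y = 0 := pow_eq_zero_iff (n := 4) (by norm_num) |>.mp hy4
  have hz2 : z ^ 2 = 0 := by linear_combination (1 / 5) * hz + (8 * t / 5) * hy0
  have ht2 : t ^ 2 = 0 := by linear_combination (1 / 5) * ht + (8 * z / 5) * hy0
  exact ⟨hy0, pow_eq_zero_iff two_ne_zero |>.mp hz2, pow_eq_zero_iff two_ne_zero |>.mp ht2⟩

theorem eq_zero_of_cubic_gradient_of_add_eq_zero (hs : s ≠ 0) (hA : s * x + 5 * y = 0)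
    (hy : 5 * y ^ 2 - s * x * y - 5 * z * t = 0) (hz : 5 * z ^ 2 - (s * x + 5 * y) * t = 0)
    (ht : 5 * t ^ 2 - (s * x + 5 * y) * z = 0) :
    x = 0 ∧ y = 0 ∧ z = 0 ∧ t = 0 := by
  have hz0 : z = 0 := pow_eq_zero_iff two_ne_zero |>.mp
    (by linear_combination (1 / 5) * hz + (t / 5) * hA)
  have ht0 : t = 0 := pow_eq_zero_iff two_ne_zero |>.mp
    (by linear_combination (1 / 5) * ht + (z / 5) * hA)
  have hy0 : y = 0 := pow_eq_zero_iff two_ne_zero |>.mp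
    (by linear_combination (1 / 10) * hy + (y / 10) * hA + (t / 2) * hz0)
  have hx0 : x = 0 := (mul_eq_zero.mp (by linear_combination hA - 5 * hy0)).resolve_left hs
  exact ⟨hx0, hy0, hz0, ht0⟩

theorem eq_zero_of_cubic_gradient_of_sub_eq_zero (hs : s ≠ 0) (hB : s * x - 3 * y = 0)
    (hy : 5 * y ^ 2 - s * x * y - 5 * z * t = 0) (hz : 5 * z ^ 2 - (s * x + 5 * y) * t = 0)
    (ht : 5 * t ^ 2 - (s * x + 5 * y) * z = 0) :
    x = 0 ∧ y = 0 ∧ z = 0 ∧ t = 0 := by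
  obtain ⟨hy0, hz0, ht0⟩ := eq_zero_of_quadric_system (y := y) (z := z) (t := t)
    (by linear_combination hy + y * hB) (by linear_combination hz + t * hB)
    (by linear_combination ht + z * hB)
  have hx0 : x = 0 := (mul_eq_zero.mp (by linear_combination hB + 3 * hy0)).resolve_left hs
  exact ⟨hx0, hy0, hz0, ht0⟩

theorem eq_zero_of_cubic_gradient (hs : s ^ 2 = 15) (hx : 3 * x ^ 2 - y ^ 2 - 2 * z * t = 0)
    (hy : 5 * y ^ 2 - s * x * y - 5 * z * t = 0) (hz : 5 * z ^ 2 - (s * x + 5 * y) * t = 0)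
    (ht : 5 * t ^ 2 - (s * x + 5 * y) * z = 0) :
    x = 0 ∧ y = 0 ∧ z = 0 ∧ t = 0 := by
  have hs0 : s ≠ 0 := by rintro rfl; norm_num at hs
  rcases mul_eq_zero.mp (cubic_gradient_factor hs hx hy) with hA | hB
  · exact eq_zero_of_cubic_gradient_of_add_eq_zero hs0 hA hy hz ht
  · exact eq_zero_of_cubic_gradient_of_sub_eq_zero hs0 hB hy hz ht

end CubicGradient

theorem stmt17 (f : MvPolynomial (Fin 4) ℂ)
    (hf : f = MvPolynomial.C (3 * (Real.sqrt 15 : ℂ)) * MvPolynomial.X 0 ^ 3 +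
        MvPolynomial.C 10 * (MvPolynomial.X 1 ^ 3 + MvPolynomial.X 2 ^ 3 +
          MvPolynomial.X 3 ^ 3) -
        MvPolynomial.C (3 * (Real.sqrt 15 : ℂ)) * MvPolynomial.X 0 * MvPolynomial.X 1 ^ 2 -
        MvPolynomial.C 6 * (MvPolynomial.C (Real.sqrt 15 : ℂ) * MvPolynomial.X 0 +
          MvPolynomial.C 5 * MvPolynomial.X 1) * MvPolynomial.X 2 * MvPolynomial.X 3) :
    ¬ ∃ a : Fin 4 → ℂ, a ≠ 0 ∧
      ∀ i : Fin 4, MvPolynomial.eval a (MvPolynomial.pderiv i f) = 0 := by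
  rintro ⟨a, ha, h⟩
  have h0 := h 0; have h1 := h 1; have h2 := h 2; have h3 := h 3
  subst hf
  simp only [Fin.isValue, map_sub, map_add, Derivation.leibniz, Derivation.leibniz_pow,
    Nat.add_one_sub_one, pderiv_X, Pi.single_eq_same, smul_eq_mul, mul_one, nsmul_eq_mul,
    Nat.cast_ofNat, derivation_C, mul_zero, add_zero, ne_eq, one_ne_zero, not_false_eq_true,
    Pi.single_eq_of_ne, Fin.reduceEq, pow_one, zero_add, map_mul, eval_C, eval_ofNat,
    map_pow, eval_X, zero_ne_one, sub_zero] at h0 h1 h2 h3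
  have hs : (Real.sqrt 15 : ℂ) ^ 2 = 15 := mod_cast Real.sq_sqrt (by norm_num : (0 : ℝ) ≤ 15)
  set s : ℂ := (Real.sqrt 15 : ℂ)
  have hx : 3 * a 0 ^ 2 - a 1 ^ 2 - 2 * a 2 * a 3 = 0 :=
    (mul_eq_zero.mp (by linear_combination h0 : (3 * s) * _ = 0)).resolve_left
      (by intro h; norm_num [s] at h)
  obtain ⟨hx0, hy0, hz0, ht0⟩ := eq_zero_of_cubic_gradient hs hx
    (by linear_combination h1 / 6) (by linear_combination h2 / 6) (by linear_combination h3 / 6)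
  exact ha (funext fun i => by fin_cases i <;> assumption)
end
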